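/- arXiv:2012.10731 — 4 statements merged into one kernel-verified Lean document; each statement's English description precedes it below -/
import Mathlib

section
/- For integers s, t with 1 ≤ s ≤ t and s ≥ C(t−s, 2) = (t−s)(t−s−1)/2, the function f_{s,t}(α) = α^s(1−α)^t + α^t(1−α)^s attains its unique maximum on [1/2, 1] at α = 1/2. -/
/-- Step bound: `(1+u)^(d+1) + (1-u)^(d+1) ≤ (1+u^2)^d * ((1+u)^d + (1-u)^d)` on `[0,1]`. -/
lemma aux_step (u : ℝ) (hu0 : 0 ≤ u) (hu1 : u ≤ 1) (d : ℕ) :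
    (1+u)^(d+1) + (1-u)^(d+1) ≤ (1+u^2)^d * ((1+u)^d + (1-u)^d) := by
  induction d with
  | zero => norm_num
  | succ d ih =>
    set w : ℝ := 1 + u^2 with hw
    have hw1 : (1:ℝ) ≤ w := by nlinarith [sq_nonneg u]
    have hw0 : (0:ℝ) < w := by linarith
    have hwd1 : (1:ℝ) ≤ w^d := one_le_pow₀ hw1
    have hwd0 : (0:ℝ) < w^d := by linarith
    have hA0 : (0:ℝ) ≤ (1+u)^d + (1-u)^d :=
      add_nonneg (pow_nonneg (by linarith) _) (pow_nonneg (by linarith) _)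
    have hB0 : (0:ℝ) ≤ (1+u)^(d+1) + (1-u)^(d+1) :=
      add_nonneg (pow_nonneg (by linarith) _) (pow_nonneg (by linarith) _)
    have hrec : (1+u)^(d+2) + (1-u)^(d+2)
        = 2*((1+u)^(d+1) + (1-u)^(d+1)) - (1-u^2)*((1+u)^d + (1-u)^d) := by ring
    have h2w : 1 - u^2 = 2 - w := by rw [hw]; ring
    -- key polynomial inequality : 2*w^d - 2 + w ≤ w^(2*d+1)
    have hpoly : 2*w^d - 2 + w ≤ w^(2*d+1) := by
      have e : w^(2*d+1) = w * (w^d)^2 := by ring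
      nlinarith [mul_nonneg (le_of_lt hw0) (sq_nonneg (w^d - 1)),
        mul_nonneg (by linarith : (0:ℝ) ≤ w - 1) (by linarith : (0:ℝ) ≤ w^d - 1)]
    -- multiply everything by w^d and cancel
    have hmain : w^d * ((1+u)^(d+2) + (1-u)^(d+2))
        ≤ w^d * (w^(d+1) * ((1+u)^(d+1) + (1-u)^(d+1))) := by
      have step1 : w^d * ((1+u)^(d+2) + (1-u)^(d+2))
          = 2*(w^d*((1+u)^(d+1) + (1-u)^(d+1))) - (2-w)*(w^d*((1+u)^d + (1-u)^d)) := by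
        rw [hrec, h2w]; ring
      have step2 : (2-w)*((1+u)^(d+1) + (1-u)^(d+1))
          ≤ (2-w)*(w^d*((1+u)^d + (1-u)^d)) := by
        apply mul_le_mul_of_nonneg_left ih
        have : u^2 ≤ 1 := by nlinarith
        linarith [h2w ▸ (by nlinarith : (0:ℝ) ≤ 1 - u^2)]
      have step3 : (2*w^d - 2 + w) * ((1+u)^(d+1) + (1-u)^(d+1))
          ≤ w^(2*d+1) * ((1+u)^(d+1) + (1-u)^(d+1)) :=
        mul_le_mul_of_nonneg_right hpoly hB0
      have e2 : w^(2*d+1) * ((1+u)^(d+1) + (1-u)^(d+1))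
          = w^d * (w^(d+1) * ((1+u)^(d+1) + (1-u)^(d+1))) := by ring
      calc w^d * ((1+u)^(d+2) + (1-u)^(d+2))
          = 2*(w^d*((1+u)^(d+1) + (1-u)^(d+1))) - (2-w)*(w^d*((1+u)^d + (1-u)^d)) := step1
        _ ≤ 2*(w^d*((1+u)^(d+1) + (1-u)^(d+1))) - (2-w)*((1+u)^(d+1) + (1-u)^(d+1)) := by
            linarith [step2]
        _ = (2*w^d - 2 + w) * ((1+u)^(d+1) + (1-u)^(d+1)) := by ring
        _ ≤ w^(2*d+1) * ((1+u)^(d+1) + (1-u)^(d+1)) := step3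
        _ = w^d * (w^(d+1) * ((1+u)^(d+1) + (1-u)^(d+1))) := e2
    exact le_of_mul_le_mul_left hmain hwd0

/-- `(1+u)^d + (1-u)^d ≤ 2 * (1+u^2)^(C(d,2))` on `[0,1]`. -/
lemma aux_bound (u : ℝ) (hu0 : 0 ≤ u) (hu1 : u ≤ 1) (d : ℕ) :
    (1+u)^d + (1-u)^d ≤ 2 * (1+u^2)^(d.choose 2) := by
  induction d with
  | zero => norm_num
  | succ d ih =>
    have hw1 : (1:ℝ) ≤ 1+u^2 := by nlinarith [sq_nonneg u]
    have hwd0 : (0:ℝ) ≤ (1+u^2)^d := by positivity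
    have h1 := aux_step u hu0 hu1 d
    have h2 : (1+u^2)^d * ((1+u)^d + (1-u)^d) ≤ (1+u^2)^d * (2 * (1+u^2)^(d.choose 2)) :=
      mul_le_mul_of_nonneg_left ih hwd0
    have hch : (d+1).choose 2 = d + d.choose 2 := by
      rw [Nat.choose_succ_succ, Nat.choose_one_right]
    calc (1+u)^(d+1) + (1-u)^(d+1) ≤ (1+u^2)^d * ((1+u)^d + (1-u)^d) := h1
      _ ≤ (1+u^2)^d * (2 * (1+u^2)^(d.choose 2)) := h2
      _ = 2 * (1+u^2)^((d+1).choose 2) := by rw [hch, pow_add]; ring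

/-- main strict inequality -/
lemma aux_strict (s d : ℕ) (hs : 1 ≤ s) (hsd : d.choose 2 ≤ s)
    (u : ℝ) (hu0 : 0 < u) (hu1 : u ≤ 1) :
    (1-u^2)^s * ((1+u)^d + (1-u)^d) < 2 := by
  rcases eq_or_lt_of_le hu1 with h | h
  · -- u = 1
    subst h
    norm_num
    rw [zero_pow (by omega : s ≠ 0)]
    norm_num
  · have hw1 : (1:ℝ) ≤ 1+u^2 := by nlinarith [sq_nonneg u]
    have h1u2 : 0 ≤ 1 - u^2 := by nlinarith
    have hb := aux_bound u hu0.le hu1 d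
    have hmono : (1+u^2)^(d.choose 2) ≤ (1+u^2)^s := pow_le_pow_right₀ hw1 hsd
    have key : (1-u^2)^s * ((1+u)^d + (1-u)^d) ≤ 2 * ((1-u^2)*(1+u^2))^s := by
      calc (1-u^2)^s * ((1+u)^d + (1-u)^d)
          ≤ (1-u^2)^s * (2 * (1+u^2)^(d.choose 2)) :=
            mul_le_mul_of_nonneg_left hb (by positivity)
        _ ≤ (1-u^2)^s * (2 * (1+u^2)^s) := by
            apply mul_le_mul_of_nonneg_left _ (by positivity)
            linarith
        _ = 2 * ((1-u^2)*(1+u^2))^s := by rw [mul_pow]; ring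
    have h4 : (1-u^2)*(1+u^2) = 1 - u^4 := by ring
    have hlt : ((1-u^2)*(1+u^2))^s < 1 := by
      rw [h4]
      apply pow_lt_one₀ (by nlinarith) (by nlinarith [pow_pos hu0 4]) (by omega)
    linarith

/-- For integers `1 ≤ s ≤ t` with `s ≥ C(t−s,2)`, the function
`f_{s,t}(α) = α^s(1−α)^t + α^t(1−α)^s` attains its unique maximum on `[1/2,1]` at `1/2`. -/
theorem stmt_2 (s t : ℕ) (hs : 1 ≤ s) (hst : s ≤ t) (hchoose : (t - s).choose 2 ≤ s) :
    ∀ α ∈ Set.Icc (1/2 : ℝ) 1,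
      (α^s * (1-α)^t + α^t * (1-α)^s ≤
        (1/2:ℝ)^s * (1-(1/2:ℝ))^t + (1/2:ℝ)^t * (1-(1/2:ℝ))^s) ∧
      (α^s * (1-α)^t + α^t * (1-α)^s =
        (1/2:ℝ)^s * (1-(1/2:ℝ))^t + (1/2:ℝ)^t * (1-(1/2:ℝ))^s → α = 1/2) := by
  obtain ⟨d, rfl⟩ := Nat.exists_eq_add_of_le hst
  have hch : d.choose 2 ≤ s := by simpa using hchoose
  intro α ⟨hα1, hα2⟩
  rcases eq_or_lt_of_le hα1 with heq | hlt
  · rw [← heq]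
    exact ⟨le_refl _, fun _ => rfl⟩
  · -- α > 1/2 : strict inequality
    set u : ℝ := 2*α - 1 with hu
    have hu0 : 0 < u := by rw [hu]; linarith
    have hu1 : u ≤ 1 := by rw [hu]; linarith
    have hstrict := aux_strict s d hs hch u hu0 hu1
    have h1 : (1:ℝ) + u = 2*α := by rw [hu]; ring
    have h2 : (1:ℝ) - u = 2*(1-α) := by rw [hu]; ring
    have h3 : (1:ℝ) - u^2 = 4*(α*(1-α)) := by rw [hu]; ring
    have hL : (1-u^2)^s * ((1+u)^d + (1-u)^d)
        = 4^s*2^d*(α^s * (1-α)^(s+d) + α^(s+d) * (1-α)^s) := by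
      rw [h1, h2, h3]
      simp only [mul_pow, pow_add]
      ring
    have hR : 4^s*2^d*((1/2:ℝ)^s * (1-(1/2:ℝ))^(s+d) + (1/2:ℝ)^(s+d) * (1-(1/2:ℝ))^s)
        = (2:ℝ) := by
      have e1 : (1:ℝ)-(1/2:ℝ) = 1/2 := by norm_num
      rw [e1]
      have e3 : (4:ℝ)^s*((1/2:ℝ)^s*(1/2:ℝ)^s) = 1 := by
        rw [← mul_pow, ← mul_pow]; norm_num
      have e4 : (2:ℝ)^d*(1/2:ℝ)^d = 1 := by rw [← mul_pow]; norm_num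
      calc 4^s*2^d*((1/2:ℝ)^s * (1/2:ℝ)^(s+d) + (1/2:ℝ)^(s+d) * (1/2:ℝ)^s)
          = ((4:ℝ)^s*((1/2:ℝ)^s*(1/2:ℝ)^s))*((2:ℝ)^d*(1/2:ℝ)^d)*2 := by rw [pow_add]; ring
        _ = 2 := by rw [e3, e4]; ring
    have hpos : (0:ℝ) < 4^s*2^d := by positivity
    have hstrict2 : 4^s*2^d*(α^s * (1-α)^(s+d) + α^(s+d) * (1-α)^s)
        < 4^s*2^d*((1/2:ℝ)^s * (1-(1/2:ℝ))^(s+d) + (1/2:ℝ)^(s+d) * (1-(1/2:ℝ))^s) := by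
      rw [hR, ← hL]; exact hstrict
    have hfin : α^s * (1-α)^(s+d) + α^(s+d) * (1-α)^s
        < (1/2:ℝ)^s * (1-(1/2:ℝ))^(s+d) + (1/2:ℝ)^(s+d) * (1-(1/2:ℝ))^s :=
      lt_of_mul_lt_mul_left hstrict2 hpos.le
    exact ⟨hfin.le, fun h => absurd h (ne_of_lt hfin)⟩
end

section
/- For integers t ≥ 2, if α ∈ [1/2,1] maximises f_{1,t}(α) = α(1−α)^t + α^t(1−α) over [1/2,1], then 1−α > 1/(t+1). -/
/-!
Let `α₀ = t/(t+1)`. Both summands of `f_{1,t}` are nonincreasing on `[α₀, 1]`, so a maximiser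
`α ≥ α₀` would make `α₀` a maximiser as well. But `α₀` is interior to `[1/2, 1]` and
`f_{1,t}'(α₀) = (1 - t²)/(t+1)^t ≠ 0`, contradicting Fermat's theorem.
-/

open Set

def f1 (t : ℕ) (x : ℝ) : ℝ := x * (1 - x) ^ t + x ^ t * (1 - x)

theorem hasDerivAt_pow_mul_one_sub_pow (m n : ℕ) (x : ℝ) :
    HasDerivAt (fun x : ℝ => x ^ m * (1 - x) ^ n)
      (m * x ^ (m - 1) * (1 - x) ^ n - n * x ^ m * (1 - x) ^ (n - 1)) x := by
  exact ((hasDerivAt_pow m x).fun_mul (((hasDerivAt_id' x).const_sub 1).fun_pow n)).congr_deriv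
    (by ring)

theorem antitoneOn_pow_succ_mul_one_sub_pow_succ (m n : ℕ) :
    AntitoneOn (fun x : ℝ => x ^ (m + 1) * (1 - x) ^ (n + 1))
      (Icc ((m + 1) / (m + n + 2)) 1) := by
  refine antitoneOn_of_hasDerivWithinAt_nonpos (convex_Icc _ _) (by fun_prop)
    (fun x _ => (hasDerivAt_pow_mul_one_sub_pow _ _ x).hasDerivWithinAt) ?_
  intro x hx
  rw [interior_Icc] at hx
  obtain ⟨hlo, hhi⟩ := hx
  rw [div_lt_iff₀ (by positivity)] at hlo
  have hx0 : 0 < x := by nlinarith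
  have hfactor : 0 ≤ x ^ m * (1 - x) ^ n := by
    have : 0 < 1 - x := by linarith
    positivity
  simp only [Nat.add_sub_cancel, Nat.cast_add, Nat.cast_one]
  calc _ = x ^ m * (1 - x) ^ n * ((m + 1) - (m + n + 2) * x) := by ring
    _ ≤ 0 := mul_nonpos_of_nonneg_of_nonpos hfactor (by linarith)

theorem antitoneOn_f1 {t : ℕ} (ht : 1 ≤ t) : AntitoneOn (f1 t) (Icc (t / (t + 1)) 1) := by
  obtain ⟨s, rfl⟩ := Nat.exists_eq_add_of_le' ht
  have hleft := antitoneOn_pow_succ_mul_one_sub_pow_succ 0 s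
  have hright := antitoneOn_pow_succ_mul_one_sub_pow_succ s 0
  simp only [pow_one, zero_add, Nat.cast_zero, add_zero] at hleft hright
  have hpoint : ((s + 1 : ℕ) : ℝ) / ((s + 1 : ℕ) + 1) = (s + 1) / (s + 2) := by
    push_cast; ring
  rw [hpoint]
  refine (hleft.mono (Icc_subset_Icc ?_ le_rfl)).add hright
  gcongr
  linarith

theorem hasDerivAt_f1 {t : ℕ} (ht : 1 ≤ t) :
    HasDerivAt (f1 t) ((1 - t ^ 2) / (t + 1) ^ t) (t / (t + 1)) := by
  have hsum := (hasDerivAt_pow_mul_one_sub_pow 1 t (t / (t + 1))).fun_add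
    (hasDerivAt_pow_mul_one_sub_pow t 1 (t / (t + 1)))
  simp only [pow_one] at hsum
  refine hsum.congr_deriv ?_
  have hone_sub : 1 - t / (t + 1 : ℝ) = 1 / (t + 1) := by field_simp; ring
  have hpoint : (t / (t + 1) : ℝ) = t * (1 / (t + 1)) := by ring
  have hvalue : (1 - t ^ 2) / (t + 1 : ℝ) ^ t = (1 - t ^ 2) * (1 / (t + 1)) ^ t := by
    rw [one_div_pow, mul_one_div]
  rw [hone_sub, hpoint, hvalue]
  generalize 1 / ((t : ℝ) + 1) = b
  obtain ⟨s, rfl⟩ := Nat.exists_eq_add_of_le' ht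
  simp only [Nat.add_sub_cancel, Nat.sub_self, pow_zero]
  ring

/-- For integers `t ≥ 2`, if `α ∈ [1/2,1]` maximises `f_{1,t}` over `[1/2,1]`,
then `1−α > 1/(t+1)`. -/
theorem stmt_3 (t : ℕ) (ht : 2 ≤ t) (α : ℝ) (hα : α ∈ Set.Icc (1/2 : ℝ) 1)
    (hmax : ∀ β ∈ Set.Icc (1/2 : ℝ) 1,
      β * (1-β)^t + β^t * (1-β) ≤ α * (1-α)^t + α^t * (1-α)) :
    1 - α > 1 / ((t:ℝ)+1) := by
  by_contra! hle
  have ht' : (2 : ℝ) ≤ t := by exact_mod_cast ht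
  have hcrit_mem : (t / (t + 1) : ℝ) ∈ Ioo (1 / 2) 1 := by
    constructor
    · rw [lt_div_iff₀ (by positivity)]; linarith
    · rw [div_lt_one (by positivity)]; linarith
  have hcrit_le : (t / (t + 1) : ℝ) ≤ α := by
    have : (t / (t + 1) : ℝ) = 1 - 1 / (t + 1) := by field_simp; ring
    linarith
  have hmaxOn : IsMaxOn (f1 t) (Icc (1 / 2) 1) (t / (t + 1)) := isMaxOn_iff.mpr fun β hβ =>
    (hmax β hβ).trans <|
      antitoneOn_f1 (by omega) ⟨le_rfl, hcrit_mem.2.le⟩ ⟨hcrit_le, hα.2⟩ hcrit_le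
  have hderiv := (hmaxOn.isLocalMax (Icc_mem_nhds hcrit_mem.1 hcrit_mem.2)).hasDerivAt_eq_zero
    (hasDerivAt_f1 (by omega))
  have hvalue_ne : (1 - t ^ 2) / (t + 1 : ℝ) ^ t ≠ 0 :=
    div_ne_zero (by nlinarith) (by positivity)
  exact hvalue_ne hderiv
end

section
/- Define h(y,z) = 2y³ − 2y⁴ − 2y³z + 5z² − 2yz² − 3y²z² − 12z³ + 4yz³ + 7z⁴ − 108/625. Then h(y,y) = y²(2y−1)(2y−5) − 108/625 < 0 for all y ∈ [0,1]. -/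
/-- On the diagonal `z = y`, the polynomial `h` from the `K_{3,1,1}` analysis equals
`y²(2y−1)(2y−5) − 108/625`, which is negative on `[0,1]`. -/
theorem stmt_12 (y : ℝ) (hy : y ∈ Set.Icc (0:ℝ) 1) :
    (2*y^3 - 2*y^4 - 2*y^3*y + 5*y^2 - 2*y*y^2 - 3*y^2*y^2 - 12*y^3 + 4*y*y^3 + 7*y^4
        - 108/625
      = y^2*(2*y-1)*(2*y-5) - 108/625) ∧
    y^2*(2*y-1)*(2*y-5) - 108/625 < 0 := by
  obtain ⟨h0, h1⟩ := hy
  refine ⟨by ring, ?_⟩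
  nlinarith [sq_nonneg y, sq_nonneg (y - 1/3), sq_nonneg (y*(y-1)), sq_nonneg (y^2 - y/3), mul_nonneg h0 h0, sq_nonneg (y-1)]
end

section
/- Define k(ℓ) = h_ℓ(0) where h_ℓ(y) = 120·ℓ·(p²/2)·((1−p)³/6 − (ℓ−1)(p²/2)(1−2p) − (ℓ−1)p³/6) with p = (1−y)/ℓ. Then for real ℓ ≥ 9, k'(ℓ) = −10·j(ℓ)/ℓ⁵ where j(ℓ) = (ℓ−9)³ + 15(ℓ−9)² + 60(ℓ−9) + 30 > 0; hence k is strictly decreasing on [9, ∞). Moreover k(9) = 1120/2187 < 525/1024 = k(8). -/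
/-- `k(ℓ) = h_ℓ(0)`, where `h_ℓ(y)` is the `K_{2,1,1,1}`-density of the complete
partite graph with `ℓ` equal independent parts of ratio `p = (1−y)/ℓ` and a clique
part of ratio `y`; here specialised to `y = 0`, i.e. `p = 1/ℓ`. -/
noncomputable def kfun (l : ℝ) : ℝ :=
  120 * l * ((1/l)^2/2) *
    ((1 - 1/l)^3/6 - (l-1) * ((1/l)^2/2) * (1 - 2*(1/l)) - (l-1) * (1/l)^3/6)

/-! Away from `ℓ = 0` the density collapses to `k(ℓ) = 10(ℓ-1)(ℓ-2)(ℓ-3)/ℓ⁴`, whose derivative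
is `-10 (ℓ³ - 12ℓ² + 33ℓ - 24)/ℓ⁵`. Expanding that cubic in powers of `ℓ - 9` makes all its
coefficients positive, so `k' < 0` on `[9, ∞)`; the two values are then plain arithmetic. -/

lemma kfun_eq_div {l : ℝ} (hl : l ≠ 0) :
    kfun l = 10 * (l - 1) * (l - 2) * (l - 3) / l ^ 4 := by
  unfold kfun
  field_simp
  ring

lemma hasDerivAt_kfun {l : ℝ} (hl : l ≠ 0) :
    HasDerivAt kfun
      (-10 * ((l - 9) ^ 3 + 15 * (l - 9) ^ 2 + 60 * (l - 9) + 30) / l ^ 5) l := by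
  have hnum : HasDerivAt (fun x : ℝ => 10 * (x - 1) * (x - 2) * (x - 3))
      (30 * l ^ 2 - 120 * l + 110) l :=
    (((((hasDerivAt_id' l).sub_const 1).const_mul 10).mul
      ((hasDerivAt_id' l).sub_const 2)).mul ((hasDerivAt_id' l).sub_const 3)).congr_deriv
      (by simp only [Pi.mul_apply]; ring)
  have hquot := hnum.div (hasDerivAt_pow 4 l) (pow_ne_zero 4 hl)
  have hev : kfun =ᶠ[nhds l] fun x => 10 * (x - 1) * (x - 2) * (x - 3) / x ^ 4 := by
    filter_upwards [isOpen_ne.mem_nhds hl] with x hx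
    exact kfun_eq_div hx
  refine (hquot.congr_deriv ?_).congr_of_eventuallyEq hev
  field_simp
  ring

lemma shifted_cubic_pos {l : ℝ} (hl : 9 ≤ l) :
    0 < (l - 9) ^ 3 + 15 * (l - 9) ^ 2 + 60 * (l - 9) + 30 := by
  have h : 0 ≤ l - 9 := by linarith
  positivity

/-- For real `ℓ ≥ 9`, `k'(ℓ) = −10·j(ℓ)/ℓ⁵` with
`j(ℓ) = (ℓ−9)³ + 15(ℓ−9)² + 60(ℓ−9) + 30 > 0`; hence `k` is strictly decreasing on
`[9,∞)`. Moreover `k(9) = 1120/2187 < 525/1024 = k(8)`. -/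
theorem stmt_17 :
    (∀ l : ℝ, 9 ≤ l →
      deriv kfun l = -10 * ((l-9)^3 + 15*(l-9)^2 + 60*(l-9) + 30) / l^5 ∧
      0 < (l-9)^3 + 15*(l-9)^2 + 60*(l-9) + 30) ∧
    StrictAntiOn kfun (Set.Ici (9:ℝ)) ∧
    kfun 9 = 1120/2187 ∧ kfun 8 = 525/1024 ∧ (1120/2187 : ℝ) < 525/1024 := by
  have hne : ∀ l : ℝ, 9 ≤ l → l ≠ 0 := fun l hl => by positivity
  have hderiv : ∀ l : ℝ, 9 ≤ l →
      deriv kfun l = -10 * ((l-9)^3 + 15*(l-9)^2 + 60*(l-9) + 30) / l^5 :=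
    fun l hl => (hasDerivAt_kfun (hne l hl)).deriv
  refine ⟨fun l hl => ⟨hderiv l hl, shifted_cubic_pos hl⟩, ?_,
    by norm_num [kfun], by norm_num [kfun], by norm_num⟩
  refine strictAntiOn_of_deriv_neg (convex_Ici 9)
    (fun l hl => (hasDerivAt_kfun (hne l hl)).continuousAt.continuousWithinAt) ?_
  intro l hl
  rw [interior_Ici, Set.mem_Ioi] at hl
  rw [hderiv l hl.le]
  have hj := shifted_cubic_pos hl.le
  have hl5 : 0 < l ^ 5 := by positivity
  exact div_neg_of_neg_of_pos (by linarith) hl5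
end
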